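/- arXiv:1805.12477 — 2 statements merged into one kernel-verified Lean document; each statement's English description precedes it below -/
import Mathlib

section
/- Let E be a finite set. The mapping ν_E restricts to a bijection between the set of graphic Lagrangian subspaces of V_E and the set of nondegeneracy set systems of symmetric E×E matrices over 𝔽₂ (i.e. nondegeneracy delta-matroids of framed graphs on the vertex set E): every graphic Lagrangian L satisfies ν_E(L) = (E; Φ(A)) for a unique symmetric matrix A, and every set system (E; Φ(A)) arises in this way from a unique graphic Lagrangian subspace. -/
/-!
A graphic Lagrangian `L` contains, for each `e`, a vector `e^∨ + Σ_{e'} A_{e e'} e'`; these are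
independent, so by dimension count they span `L`, i.e. `L` is the graph `{(x A, x)}` of a matrix
`A`, and isotropy of the graph is exactly the symmetry of `A`. A graph vector `(x A, x)` lies in
the span of `{e^∨ : e ∈ Y} ∪ {e : e ∉ Y}` iff `x` is supported on `Y` and `x A` vanishes on `Y`,
i.e. iff `x|_Y` is in the left kernel of `A|_Y`; hence `ν_E(graph A) = Φ(A)`. Conversely a
symmetric matrix over `𝔽₂` is recovered from `Φ(A)`: its diagonal from the singletons and its
off-diagonal entries from the `2 × 2` principal minors.
-/

open Finset
open scoped symmDiff

variable {E : Type*} [Fintype E] [DecidableEq E]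

/-- The symplectic vector space `V_E = (E → 𝔽₂) × (E → 𝔽₂)`. -/
abbrev V (E : Type*) : Type _ := (E → ZMod 2) × (E → ZMod 2)

/-- Basis vector `e`. -/
def baseV (e : E) : V E := (Pi.single e 1, 0)

/-- Basis vector `e^∨`. -/
def dualV (e : E) : V E := (0, Pi.single e 1)

/-- The symplectic form on `V E`. -/
def omegaForm (u v : V E) : ZMod 2 := ∑ e, (u.1 e * v.2 e + u.2 e * v.1 e)

/-- A subspace is Lagrangian if the form vanishes on it and its dimension is `|E|`. -/
def IsLagrangian (L : Submodule (ZMod 2) (V E)) : Prop :=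
  (∀ u ∈ L, ∀ v ∈ L, omegaForm u v = 0) ∧
    Module.finrank (ZMod 2) L = Fintype.card E

/-- The span of `{e^∨ : e ∈ Y} ∪ {e : e ∈ E \ Y}`. -/
def coordSpan (Y : Finset E) : Submodule (ZMod 2) (V E) :=
  Submodule.span (ZMod 2)
    ((fun e => dualV e) '' (Y : Set E) ∪ (fun e => baseV e) '' ((Yᶜ : Finset E) : Set E))

/-- `Y` is feasible for `L` iff `L ∩ ⟨Y^∨ ⊔ (E \ Y)⟩ = 0`. -/
def Feasible (L : Submodule (ZMod 2) (V E)) (Y : Finset E) : Prop :=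
  L ⊓ coordSpan Y = ⊥

/-- The set system `ν_E(L)`. -/
def nu (L : Submodule (ZMod 2) (V E)) : Set (Finset E) := {Y | Feasible L Y}

/-- The nondegeneracy set system of a matrix `A`. -/
def Phi (A : Matrix E E (ZMod 2)) : Set (Finset E) :=
  {U : Finset E | IsUnit (A.submatrix (fun i : ↥U => (i : E)) (fun j : ↥U => (j : E))).det}

/-- The symmetric exchange axiom. -/
def SEAxiom (Φ : Set (Finset E)) : Prop :=
  ∀ φ₁ ∈ Φ, ∀ φ₂ ∈ Φ, ∀ e ∈ φ₁ ∆ φ₂, ∃ e' ∈ φ₁ ∆ φ₂, φ₁ ∆ ({e, e'} : Finset E) ∈ Φ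

/-- Binary delta-matroid: a twist of a nondegeneracy set system. -/
def IsBinaryDM (Φ : Set (Finset E)) : Prop :=
  ∃ (A : Matrix E E (ZMod 2)) (E' : Finset E), A.IsSymm ∧ Φ = (· ∆ E') '' Phi A

/-- The involution `σ_e` swapping `e` and `e^∨`. -/
def sigmaE (e : E) : V E →ₗ[ZMod 2] V E where
  toFun u := (fun f => if f = e then u.2 f else u.1 f, fun f => if f = e then u.1 f else u.2 f)
  map_add' u v := by ext f <;> dsimp <;> split <;> rfl
  map_smul' c u := by ext f <;> dsimp <;> split <;> rfl

/-- Composition of the `σ_e` over `e ∈ E'`. -/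
def sigmaSet (E' : Finset E) : V E →ₗ[ZMod 2] V E where
  toFun u := (fun f => if f ∈ E' then u.2 f else u.1 f, fun f => if f ∈ E' then u.1 f else u.2 f)
  map_add' u v := by ext f <;> dsimp <;> split <;> rfl
  map_smul' c u := by ext f <;> dsimp <;> split <;> rfl

/-- A Lagrangian subspace is graphic if for every `e` there is `v_e ∈ L` with
`ω(v_e,e)=1` and `ω(v_e,e')=0` for `e' ≠ e`. -/
def IsGraphic (L : Submodule (ZMod 2) (V E)) : Prop :=
  ∀ e : E, ∃ v ∈ L, omegaForm v (baseV e) = 1 ∧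
    ∀ e' : E, e' ≠ e → omegaForm v (baseV e') = 0

/-- The vector `e^∨ + Σ_{e'} A_{e,e'} e'`. -/
def rowVec (A : Matrix E E (ZMod 2)) (e : E) : V E := (A e, Pi.single e 1)

/-- The subspace spanned by the vectors `rowVec A e`, `e ∈ E`. -/
def graphOf (A : Matrix E E (ZMod 2)) : Submodule (ZMod 2) (V E) :=
  Submodule.span (ZMod 2) (Set.range (rowVec A))

/-- The first Vassiliev move: `e^∨ ↦ e^∨ + e'`, `e'^∨ ↦ e'^∨ + e`, fixing other basis vectors. -/
def vassiliev1 (e e' : E) : V E →ₗ[ZMod 2] V E where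
  toFun u := (fun f => u.1 f + (if f = e' then u.2 e else 0) + (if f = e then u.2 e' else 0), u.2)
  map_add' u v := by ext f <;> dsimp <;> split_ifs <;> ring
  map_smul' c u := by ext f <;> dsimp <;> split_ifs <;> ring

open Matrix

omit [DecidableEq E] in
lemma omegaForm_eq_dotProduct (u v : V E) : omegaForm u v = u.1 ⬝ᵥ v.2 + u.2 ⬝ᵥ v.1 := by
  simp only [omegaForm, dotProduct, sum_add_distrib]

lemma omegaForm_baseV (v : V E) (e : E) : omegaForm v (baseV e) = v.2 e := by
  simp [omegaForm_eq_dotProduct, baseV]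

def graphMap (A : Matrix E E (ZMod 2)) : (E → ZMod 2) →ₗ[ZMod 2] V E :=
  A.vecMulLinear.prod LinearMap.id

lemma rowVec_eq_graphMap (A : Matrix E E (ZMod 2)) (e : E) :
    rowVec A e = graphMap A (Pi.single e 1) := by
  simp [rowVec, graphMap, Matrix.row]

lemma graphOf_eq_range (A : Matrix E E (ZMod 2)) : graphOf A = LinearMap.range (graphMap A) := by
  rw [graphOf, funext (rowVec_eq_graphMap A), Set.range_comp', Submodule.span_image,
    LinearMap.range_eq_map]
  congr
  rw [← (Pi.basisFun (ZMod 2) E).span_eq, funext (Pi.basisFun_apply (ZMod 2) E)]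

omit [DecidableEq E] in
lemma graphMap_injective (A : Matrix E E (ZMod 2)) : Function.Injective (graphMap A) :=
  fun _ _ h => congrArg Prod.snd h

lemma finrank_graphOf (A : Matrix E E (ZMod 2)) :
    Module.finrank (ZMod 2) (graphOf A) = Fintype.card E := by
  rw [graphOf_eq_range, LinearMap.finrank_range_of_inj (graphMap_injective A),
    Module.finrank_fintype_fun_eq_card]

omit [DecidableEq E] in
lemma omegaForm_graphMap (A : Matrix E E (ZMod 2)) (x y : E → ZMod 2) :
    omegaForm (graphMap A x) (graphMap A y) = x ⬝ᵥ (A *ᵥ y) + x ⬝ᵥ (Aᵀ *ᵥ y) := by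
  simp [omegaForm_eq_dotProduct, graphMap, dotProduct_mulVec, mulVec_transpose]

lemma isLagrangian_graphOf_iff {A : Matrix E E (ZMod 2)} : IsLagrangian (graphOf A) ↔ A.IsSymm := by
  refine ⟨fun hL => IsSymm.ext fun f e => ?_, fun hA => ⟨?_, finrank_graphOf A⟩⟩
  · rw [graphOf_eq_range] at hL
    have h := hL.1 _ (LinearMap.mem_range_self _ (Pi.single e 1))
      _ (LinearMap.mem_range_self _ (Pi.single f 1))
    simp only [omegaForm_graphMap, mulVec_single_one, single_dotProduct, one_mul, col_apply,
      transpose_apply] at h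
    exact CharTwo.add_eq_zero.1 h
  · rw [graphOf_eq_range]
    rintro - ⟨x, rfl⟩ - ⟨y, rfl⟩
    rw [omegaForm_graphMap, hA.eq, CharTwo.add_self_eq_zero]

lemma isGraphic_graphOf (A : Matrix E E (ZMod 2)) : IsGraphic (graphOf A) := by
  refine fun e => ⟨rowVec A e, Submodule.subset_span ⟨e, rfl⟩, ?_, fun e' he' => ?_⟩ <;>
    simp [omegaForm_baseV, rowVec, *]

lemma IsGraphic.exists_eq_graphOf {L : Submodule (ZMod 2) (V E)} (hL : IsLagrangian L)
    (hG : IsGraphic L) : ∃ A : Matrix E E (ZMod 2), L = graphOf A := by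
  choose v hvL hv_self hv_ne using hG
  have hrow (e : E) : rowVec (Matrix.of fun e => (v e).1) e = v e := by
    refine Prod.ext rfl (funext fun f => ?_)
    show (Pi.single e 1 : E → ZMod 2) f = (v e).2 f
    rcases eq_or_ne f e with rfl | hfe
    · rw [← omegaForm_baseV, hv_self, Pi.single_eq_same]
    · rw [← omegaForm_baseV, hv_ne _ _ hfe, Pi.single_eq_of_ne hfe]
  have hle : graphOf (Matrix.of fun e => (v e).1) ≤ L := by
    rw [graphOf, Submodule.span_le]
    rintro _ ⟨e, rfl⟩
    exact hrow e ▸ hvL e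
  exact ⟨_, (Submodule.eq_of_le_of_finrank_eq hle (by rw [finrank_graphOf, hL.2])).symm⟩

lemma sum_smul_baseV_add_smul_dualV (v : V E) :
    ∑ f, (v.1 f • baseV f + v.2 f • dualV f) = v := by
  ext g <;> simp [baseV, dualV, Prod.fst_sum, Prod.snd_sum, Finset.sum_apply, Pi.single_apply]

lemma coordSpan_le_ker {Y : Finset E} {φ : V E →ₗ[ZMod 2] ZMod 2}
    (hdual : ∀ e ∈ Y, φ (dualV e) = 0) (hbase : ∀ e ∉ Y, φ (baseV e) = 0) :
    coordSpan Y ≤ LinearMap.ker φ := by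
  rw [coordSpan, Submodule.span_le]
  rintro _ (⟨e, he, rfl⟩ | ⟨e, he, rfl⟩)
  · exact hdual e he
  · exact hbase e (by simpa using he)

lemma mem_coordSpan {Y : Finset E} {v : V E} :
    v ∈ coordSpan Y ↔ (∀ f ∈ Y, v.1 f = 0) ∧ ∀ f ∉ Y, v.2 f = 0 := by
  constructor
  · intro hv
    refine ⟨fun f hf => ?_, fun f hf => ?_⟩
    · refine coordSpan_le_ker (φ := (LinearMap.proj f).comp (LinearMap.fst _ _ _))
        (fun e _ => by simp [dualV]) (fun e he => ?_) hv
      simp [baseV, show f ≠ e by rintro rfl; exact he hf]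
    · refine coordSpan_le_ker (φ := (LinearMap.proj f).comp (LinearMap.snd _ _ _))
        (fun e he => ?_) (fun e _ => by simp [baseV]) hv
      simp [dualV, show f ≠ e by rintro rfl; exact hf he]
  · rintro ⟨h1, h2⟩
    rw [← sum_smul_baseV_add_smul_dualV v]
    refine Submodule.sum_mem _ fun f _ => ?_
    by_cases hf : f ∈ Y
    · rw [h1 f hf, zero_smul, zero_add]
      exact Submodule.smul_mem _ _ (Submodule.subset_span (Or.inl ⟨f, hf, rfl⟩))
    · rw [h2 f hf, zero_smul, add_zero]
      exact Submodule.smul_mem _ _ (Submodule.subset_span (Or.inr ⟨f, by simpa using hf, rfl⟩))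

lemma vecMul_submatrix_coe_of_support {R n : Type*} [Fintype n] [NonUnitalNonAssocSemiring R]
    {Y : Finset n} {x : n → R} (hx : ∀ f ∉ Y, x f = 0) (A : Matrix n n R) (i : Y) :
    ((fun j : Y => x j) ᵥ* A.submatrix (fun i : Y => (i : n)) (fun j : Y => (j : n))) i =
      (x ᵥ* A) i := by
  simp only [vecMul, dotProduct, submatrix_apply]
  rw [Finset.sum_coe_sort Y (fun j => x j * A j i)]
  exact Finset.sum_subset (subset_univ Y) fun j _ hj => by rw [hx j hj, zero_mul]

lemma feasible_graphOf_iff {A : Matrix E E (ZMod 2)} {Y : Finset E} :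
    Feasible (graphOf A) Y ↔ ∀ w : Y → ZMod 2,
      w ᵥ* A.submatrix (fun i : Y => (i : E)) (fun j : Y => (j : E)) = 0 → w = 0 := by
  rw [Feasible, graphOf_eq_range, Submodule.eq_bot_iff]
  constructor
  · intro h w hw
    let x : E → ZMod 2 := fun e => if he : e ∈ Y then w ⟨e, he⟩ else 0
    have hx : ∀ f ∉ Y, x f = 0 := fun f hf => dif_neg hf
    have hxw : (fun j : Y => x j) = w := funext fun j => dif_pos j.2
    have hxA (f : E) (hf : f ∈ Y) : (x ᵥ* A) f = 0 := by
      rw [← vecMul_submatrix_coe_of_support hx A ⟨f, hf⟩, hxw, hw, Pi.zero_apply]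
    have h0 := h (graphMap A x) ⟨LinearMap.mem_range_self _ x, mem_coordSpan.2 ⟨hxA, hx⟩⟩
    rw [← hxw, graphMap_injective A (h0.trans (map_zero _).symm)]
    rfl
  · rintro h _ ⟨⟨x, rfl⟩, hx⟩
    obtain ⟨hxA, hxY⟩ := mem_coordSpan.1 hx
    have hw := h (fun j => x j) (funext fun i =>
      (vecMul_submatrix_coe_of_support hxY A i).trans (hxA _ i.2))
    have hx0 : x = 0 := funext fun f => if hf : f ∈ Y then congrFun hw ⟨f, hf⟩ else hxY f hf
    rw [hx0, map_zero]

theorem nu_graphOf (A : Matrix E E (ZMod 2)) : nu (graphOf A) = Phi A := by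
  ext Y
  rw [nu, Phi, Set.mem_ofPred_eq, Set.mem_ofPred_eq, feasible_graphOf_iff, isUnit_iff_ne_zero,
    Ne, ← exists_vecMul_eq_zero_iff]
  simp only [not_exists, not_and', ne_eq, not_not]

lemma det_submatrix_embedding_eq {R ι n : Type*} [CommRing R] [Fintype ι] [DecidableEq ι]
    [DecidableEq n] (g : ι ↪ n) (A : Matrix n n R) :
    (A.submatrix (fun i : ↥(univ.map g) => (i : n)) (fun j : ↥(univ.map g) => (j : n))).det =
      (A.submatrix g g).det := by
  let σ : ι ≃ ↥(univ.map g) := Equiv.ofBijective (fun i => ⟨g i, mem_map_of_mem g (mem_univ i)⟩)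
    ⟨fun i j h => g.injective (congrArg Subtype.val h), fun ⟨x, hx⟩ => by
      obtain ⟨i, -, rfl⟩ := mem_map.1 hx
      exact ⟨i, rfl⟩⟩
  rw [← det_submatrix_equiv_self σ]
  rfl

omit [Fintype E] in
lemma map_univ_mem_Phi_iff {ι : Type*} [Fintype ι] [DecidableEq ι] (g : ι ↪ E)
    (A : Matrix E E (ZMod 2)) : univ.map g ∈ Phi A ↔ (A.submatrix g g).det ≠ 0 := by
  rw [Phi, Set.mem_ofPred_eq, det_submatrix_embedding_eq, isUnit_iff_ne_zero]

omit [Fintype E] in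
lemma singleton_mem_Phi_iff (A : Matrix E E (ZMod 2)) (e : E) : {e} ∈ Phi A ↔ A e e ≠ 0 := by
  rw [Phi, Set.mem_ofPred_eq, det_unique, isUnit_iff_ne_zero]
  rfl

omit [Fintype E] in
lemma pair_mem_Phi_iff (A : Matrix E E (ZMod 2)) {e f : E} (hef : e ≠ f) :
    {e, f} ∈ Phi A ↔ A e e * A f f - A e f * A f e ≠ 0 := by
  let g : Fin 2 ↪ E := ⟨![e, f], by
    intro i j; fin_cases i <;> fin_cases j <;> simp [hef, hef.symm]⟩
  have : ({e, f} : Finset E) = univ.map g := by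
    ext; simp [Fin.exists_fin_two, show g 0 = e from rfl, show g 1 = f from rfl, eq_comm]
  rw [this, map_univ_mem_Phi_iff, det_fin_two]
  rfl

omit [Fintype E] in
theorem eq_of_Phi_eq {A B : Matrix E E (ZMod 2)} (hA : A.IsSymm) (hB : B.IsSymm)
    (h : Phi A = Phi B) : A = B := by
  have hdiag (e : E) : A e e = B e e := by
    have key : ∀ x y : ZMod 2, (x ≠ 0 ↔ y ≠ 0) → x = y := by decide
    exact key _ _ (by rw [← singleton_mem_Phi_iff, ← singleton_mem_Phi_iff, h])
  ext e f
  rcases eq_or_ne e f with rfl | hef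
  · exact hdiag e
  · -- since `x * x = x` in `𝔽₂`, the `2 × 2` minor determines the off-diagonal entry
    have key : ∀ a b x y : ZMod 2, (a * b - x * x ≠ 0 ↔ a * b - y * y ≠ 0) → x = y := by decide
    have hpair := (pair_mem_Phi_iff A hef).symm.trans (h ▸ pair_mem_Phi_iff B hef)
    rw [hA.apply e f, hB.apply e f, hdiag e, hdiag f] at hpair
    exact key _ _ _ _ hpair

/-- `ν_E` restricts to a bijection between graphic Lagrangian subspaces of
`V_E` and nondegeneracy set systems of symmetric matrices over `𝔽₂`: every graphic
Lagrangian `L` satisfies `ν_E(L) = Φ(A)` for a unique symmetric `A`, and every `Φ(A)`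
arises from a unique graphic Lagrangian subspace. -/
theorem stmt5 :
    (∀ L : Submodule (ZMod 2) (V E), IsLagrangian L → IsGraphic L →
      ∃! A : Matrix E E (ZMod 2), A.IsSymm ∧ nu L = Phi A) ∧
    (∀ A : Matrix E E (ZMod 2), A.IsSymm →
      ∃! L : Submodule (ZMod 2) (V E), (IsLagrangian L ∧ IsGraphic L) ∧ nu L = Phi A) := by
  refine ⟨fun L hL hG => ?_, fun A hA => ?_⟩
  · obtain ⟨A, rfl⟩ := hG.exists_eq_graphOf hL
    have hA := isLagrangian_graphOf_iff.1 hL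
    exact ⟨A, ⟨hA, nu_graphOf A⟩, fun B ⟨hB, hBA⟩ =>
      eq_of_Phi_eq hB hA (by rw [← hBA, nu_graphOf])⟩
  · refine ⟨graphOf A, ⟨⟨isLagrangian_graphOf_iff.2 hA, isGraphic_graphOf A⟩, nu_graphOf A⟩, ?_⟩
    rintro L ⟨⟨hL, hG⟩, hLA⟩
    obtain ⟨B, rfl⟩ := hG.exists_eq_graphOf hL
    rw [eq_of_Phi_eq (isLagrangian_graphOf_iff.1 hL) hA (by rw [← hLA, nu_graphOf])]
end

section
/- Let E be a finite set and e, e' ∈ E two distinct elements. The second Vassiliev move, i.e. the linear map S = σ_{e'} ∘ T ∘ σ_{e'}: V_E → V_E, where T is the first Vassiliev move for the pair (e, e') and σ_{e'} is the involution swapping e' and e'^∨ and fixing the other basis vectors, preserves the symplectic form ω; consequently S maps every Lagrangian subspace of V_E to a Lagrangian subspace. -/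
open Finset
open scoped symmDiff

variable {E : Type*} [Fintype E] [DecidableEq E]

/-
`σ_{e'}` preserves `ω` because it only swaps the two summands of the `e'`-th term of `ω`, and
`T` preserves `ω` because it changes `ω(u, v)` by `2 (u.2 e * v.2 e' + u.2 e' * v.2 e) = 0`.
Hence the second move is symplectic. A symplectic map is injective since `ω` is nondegenerate,
so it preserves the dimension of subspaces as well as their isotropy.
-/

theorem omegaForm_baseV_s16 (u : V E) (f : E) : omegaForm u (baseV f) = u.2 f := by
  simp [omegaForm, baseV, Pi.single_apply]

theorem omegaForm_dualV (u : V E) (f : E) : omegaForm u (dualV f) = u.1 f := by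
  simp [omegaForm, dualV, Pi.single_apply]

theorem eq_zero_of_forall_omegaForm_eq_zero {u : V E} (hu : ∀ v, omegaForm u v = 0) : u = 0 :=
  Prod.ext (funext fun f => (omegaForm_dualV u f).symm.trans (hu _))
    (funext fun f => (omegaForm_baseV_s16 u f).symm.trans (hu _))

def IsSymplectic (f : V E →ₗ[ZMod 2] V E) : Prop :=
  ∀ u v : V E, omegaForm (f u) (f v) = omegaForm u v

namespace IsSymplectic

theorem comp {F : Type*} [Fintype F] {f g : V F →ₗ[ZMod 2] V F} (hf : IsSymplectic f)
    (hg : IsSymplectic g) : IsSymplectic (f.comp g) :=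
  fun u v => (hf (g u) (g v)).trans (hg u v)

theorem injective {f : V E →ₗ[ZMod 2] V E} (hf : IsSymplectic f) : Function.Injective f := by
  refine (injective_iff_map_eq_zero f).2 fun u hu =>
    eq_zero_of_forall_omegaForm_eq_zero fun v => ?_
  rw [← hf, hu]
  simp [omegaForm]

theorem isLagrangian_map {f : V E →ₗ[ZMod 2] V E} (hf : IsSymplectic f)
    {L : Submodule (ZMod 2) (V E)} (hL : IsLagrangian L) : IsLagrangian (L.map f) := by
  refine ⟨?_, ?_⟩
  · rintro _ ⟨u, hu, rfl⟩ _ ⟨v, hv, rfl⟩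
    rw [hf]
    exact hL.1 u hu v hv
  · rw [← (Submodule.equivMapOfInjective f hf.injective L).finrank_eq]
    exact hL.2

end IsSymplectic

theorem isSymplectic_sigmaE (e : E) : IsSymplectic (sigmaE e) := by
  intro u v
  refine Finset.sum_congr rfl fun f _ => ?_
  simp only [sigmaE, LinearMap.coe_mk, AddHom.coe_mk]
  split_ifs <;> ring

theorem isSymplectic_vassiliev1 (e e' : E) : IsSymplectic (vassiliev1 e e') := by
  intro u v
  simp only [omegaForm, vassiliev1, LinearMap.coe_mk, AddHom.coe_mk, add_mul, mul_add,
    ite_mul, mul_ite, zero_mul, mul_zero, Finset.sum_add_distrib, Finset.sum_ite_eq',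
    Finset.mem_univ, if_true]
  ring_nf
  reduce_mod_char

theorem stmt16_general (e e' : E) :
    (∀ u v : V E,
        omegaForm ((sigmaE e').comp ((vassiliev1 e e').comp (sigmaE e')) u)
          ((sigmaE e').comp ((vassiliev1 e e').comp (sigmaE e')) v) = omegaForm u v) ∧
    ∀ L : Submodule (ZMod 2) (V E), IsLagrangian L →
      IsLagrangian (L.map ((sigmaE e').comp ((vassiliev1 e e').comp (sigmaE e')))) := by
  have hS : IsSymplectic ((sigmaE e').comp ((vassiliev1 e e').comp (sigmaE e'))) :=
    (isSymplectic_sigmaE e').comp ((isSymplectic_vassiliev1 e e').comp (isSymplectic_sigmaE e'))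
  exact ⟨hS, fun L => hS.isLagrangian_map⟩

/-- the second Vassiliev move `σ_{e'} ∘ T ∘ σ_{e'}` preserves the symplectic
form; consequently it maps Lagrangian subspaces to Lagrangian subspaces. -/
theorem stmt16 (e e' : E) (hne : e ≠ e') :
    (∀ u v : V E,
        omegaForm ((sigmaE e').comp ((vassiliev1 e e').comp (sigmaE e')) u)
          ((sigmaE e').comp ((vassiliev1 e e').comp (sigmaE e')) v) = omegaForm u v) ∧
    ∀ L : Submodule (ZMod 2) (V E), IsLagrangian L →
      IsLagrangian (L.map ((sigmaE e').comp ((vassiliev1 e e').comp (sigmaE e')))) :=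
  stmt16_general e e'
end
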